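/- arXiv:1405.5441 — 3 statements merged into one kernel-verified Lean document; each statement's English description precedes it below -/
import Mathlib

section
/- For all τ, v, u ∈ ℝ, the squared Euclidean norm of F(τ, v, u) equals e^{2τ sin v}, and the absolute value of the determinant of the Jacobian matrix (total derivative) of F at (τ, v, u) equals e^{3τ sin v} · |τ| · |sin(τ cos v)|. -/
/-!
`F` is the composite of `(τ, v, u) ↦ (τ sin v, τ cos v, u)` (a unit-speed geodesic at altitude `v`
moves with speed `sin v` along the `ℝ` factor and `cos v` along `S²`) with the exponential spherical
coordinates `(s, θ, u) ↦ e^s (cos θ, sin θ cos u, sin θ sin u)`, whose image has norm `e^s`.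
The first map has Jacobian determinant `-τ` (polar coordinates), the second `e^{3s} sin θ`
(spherical coordinates of radius `e^s`), and the chain rule multiplies them.
-/

open Real

/-- The geodesic polar parametrization `F (τ, v, u)` of `S²×R` in the projective model:
the point at geodesic distance `τ` from `(1,0,0)` along the geodesic with altitude `v`
and longitude `u`. -/
noncomputable def F (p : ℝ × ℝ × ℝ) : ℝ × ℝ × ℝ :=
  (Real.exp (p.1 * Real.sin p.2.1) * Real.cos (p.1 * Real.cos p.2.1),
   Real.exp (p.1 * Real.sin p.2.1) * Real.sin (p.1 * Real.cos p.2.1) * Real.cos p.2.2,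
   Real.exp (p.1 * Real.sin p.2.1) * Real.sin (p.1 * Real.cos p.2.1) * Real.sin p.2.2)

def LinearEquiv.finThreeArrowProd (R : Type*) [Semiring R] : (Fin 3 → R) ≃ₗ[R] R × R × R where
  toFun f := (f 0, f 1, f 2)
  invFun x := ![x.1, x.2.1, x.2.2]
  map_add' _ _ := rfl
  map_smul' _ _ := rfl
  left_inv f := by ext i; fin_cases i <;> rfl
  right_inv _ := rfl

theorem LinearMap.det_eq_det_matrix_of_prod_three {R : Type*} [CommRing R]
    (L : (R × R × R) →ₗ[R] R × R × R) :
    L.det = !![(L (1, 0, 0)).1, (L (0, 1, 0)).1, (L (0, 0, 1)).1;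
               (L (1, 0, 0)).2.1, (L (0, 1, 0)).2.1, (L (0, 0, 1)).2.1;
               (L (1, 0, 0)).2.2, (L (0, 1, 0)).2.2, (L (0, 0, 1)).2.2].det := by
  rw [← LinearMap.det_toMatrix ((Pi.basisFun R (Fin 3)).map (LinearEquiv.finThreeArrowProd R))]
  congr 1
  ext i j
  fin_cases i <;> fin_cases j <;> rfl

theorem ContinuousLinearMap.det_comp {R M : Type*} [CommRing R] [TopologicalSpace M]
    [AddCommGroup M] [Module R M] (A B : M →L[R] M) : (A ∘L B).det = A.det * B.det :=
  LinearMap.det_comp _ _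

theorem det_fderiv_eq_det_partialDerivs {𝕜 : Type*} [NontriviallyNormedField 𝕜]
    {f : 𝕜 × 𝕜 × 𝕜 → 𝕜 × 𝕜 × 𝕜} {x y z : 𝕜} (hf : DifferentiableAt 𝕜 f (x, y, z))
    {a b c : 𝕜 × 𝕜 × 𝕜}
    (ha : HasDerivAt (fun t => f (t, y, z)) a x)
    (hb : HasDerivAt (fun t => f (x, t, z)) b y)
    (hc : HasDerivAt (fun t => f (x, y, t)) c z) :
    (fderiv 𝕜 f (x, y, z)).det =
      !![a.1, b.1, c.1; a.2.1, b.2.1, c.2.1; a.2.2, b.2.2, c.2.2].det := by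
  have hx : HasDerivAt (fun t : 𝕜 => (t, y, z)) (1, 0, 0) x :=
    (hasDerivAt_id x).prodMk ((hasDerivAt_const x y).prodMk (hasDerivAt_const x z))
  have hy : HasDerivAt (fun t : 𝕜 => (x, t, z)) (0, 1, 0) y :=
    (hasDerivAt_const y x).prodMk ((hasDerivAt_id y).prodMk (hasDerivAt_const y z))
  have hz : HasDerivAt (fun t : 𝕜 => (x, y, t)) (0, 0, 1) z :=
    (hasDerivAt_const z x).prodMk ((hasDerivAt_const z y).prodMk (hasDerivAt_id z))
  rw [ContinuousLinearMap.det, LinearMap.det_eq_det_matrix_of_prod_three]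
  simp only [ContinuousLinearMap.coe_coe]
  rw [(hf.hasFDerivAt.comp_hasDerivAt x hx).unique ha,
    (hf.hasFDerivAt.comp_hasDerivAt y hy).unique hb,
    (hf.hasFDerivAt.comp_hasDerivAt z hz).unique hc]

noncomputable def expSphericalCoord (p : ℝ × ℝ × ℝ) : ℝ × ℝ × ℝ :=
  (exp p.1 * cos p.2.1, exp p.1 * sin p.2.1 * cos p.2.2, exp p.1 * sin p.2.1 * sin p.2.2)

noncomputable def altitudePolarCoord (p : ℝ × ℝ × ℝ) : ℝ × ℝ × ℝ :=
  (p.1 * sin p.2.1, p.1 * cos p.2.1, p.2.2)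

theorem F_eq_expSphericalCoord_comp_altitudePolarCoord :
    F = expSphericalCoord ∘ altitudePolarCoord := rfl

theorem expSphericalCoord_normSq (p : ℝ × ℝ × ℝ) :
    (expSphericalCoord p).1 ^ 2 + (expSphericalCoord p).2.1 ^ 2 + (expSphericalCoord p).2.2 ^ 2 =
      exp (2 * p.1) := by
  simp only [expSphericalCoord]
  rw [two_mul, exp_add]
  linear_combination exp p.1 ^ 2 * sin p.2.1 ^ 2 * sin_sq_add_cos_sq p.2.2
    + exp p.1 ^ 2 * sin_sq_add_cos_sq p.2.1

theorem differentiable_expSphericalCoord : Differentiable ℝ expSphericalCoord := by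
  unfold expSphericalCoord; fun_prop

theorem differentiable_altitudePolarCoord : Differentiable ℝ altitudePolarCoord := by
  unfold altitudePolarCoord; fun_prop

theorem det_fderiv_expSphericalCoord (p : ℝ × ℝ × ℝ) :
    (fderiv ℝ expSphericalCoord p).det = exp (3 * p.1) * sin p.2.1 := by
  obtain ⟨s, θ, φ⟩ := p
  have hs : HasDerivAt (fun t => expSphericalCoord (t, θ, φ)) (expSphericalCoord (s, θ, φ)) s := by
    simp only [expSphericalCoord]
    exact ((hasDerivAt_exp s).mul_const _).prodMk
      ((((hasDerivAt_exp s).mul_const _).mul_const _).prodMk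
        (((hasDerivAt_exp s).mul_const _).mul_const _))
  have hθ : HasDerivAt (fun t => expSphericalCoord (s, t, φ))
      (exp s * -sin θ, exp s * cos θ * cos φ, exp s * cos θ * sin φ) θ := by
    simp only [expSphericalCoord]
    exact ((hasDerivAt_cos θ).const_mul _).prodMk
      ((((hasDerivAt_sin θ).const_mul _).mul_const _).prodMk
        (((hasDerivAt_sin θ).const_mul _).mul_const _))
  have hφ : HasDerivAt (fun t => expSphericalCoord (s, θ, t))
      (0, exp s * sin θ * -sin φ, exp s * sin θ * cos φ) φ := by
    simp only [expSphericalCoord]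
    exact (hasDerivAt_const φ _).prodMk (((hasDerivAt_cos φ).const_mul _).prodMk
      ((hasDerivAt_sin φ).const_mul _))
  rw [det_fderiv_eq_det_partialDerivs (differentiable_expSphericalCoord _) hs hθ hφ]
  simp only [expSphericalCoord, Matrix.det_fin_three, Matrix.of_apply, Matrix.cons_val',
    Matrix.cons_val_zero, Matrix.cons_val_fin_one, Matrix.cons_val_one, Matrix.cons_val]
  rw [show 3 * s = s + s + s by ring, exp_add, exp_add]
  linear_combination exp s ^ 3 * sin θ * (sin θ ^ 2 * sin_sq_add_cos_sq φ
    + cos θ ^ 2 * sin_sq_add_cos_sq φ + sin_sq_add_cos_sq θ)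

theorem det_fderiv_altitudePolarCoord (p : ℝ × ℝ × ℝ) :
    (fderiv ℝ altitudePolarCoord p).det = -p.1 := by
  obtain ⟨r, α, φ⟩ := p
  have hr : HasDerivAt (fun t => altitudePolarCoord (t, α, φ)) (sin α, cos α, 0) r := by
    simpa [altitudePolarCoord] using ((hasDerivAt_id r).mul_const (sin α)).prodMk
      (((hasDerivAt_id r).mul_const (cos α)).prodMk (hasDerivAt_const r φ))
  have hα : HasDerivAt (fun t => altitudePolarCoord (r, t, φ)) (r * cos α, r * -sin α, 0) α := by
    simp only [altitudePolarCoord]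
    exact ((hasDerivAt_sin α).const_mul r).prodMk
      (((hasDerivAt_cos α).const_mul r).prodMk (hasDerivAt_const α φ))
  have hφ : HasDerivAt (fun t => altitudePolarCoord (r, α, t)) (0, 0, 1) φ := by
    simp only [altitudePolarCoord]
    exact (hasDerivAt_const φ _).prodMk ((hasDerivAt_const φ _).prodMk (hasDerivAt_id φ))
  rw [det_fderiv_eq_det_partialDerivs (differentiable_altitudePolarCoord _) hr hα hφ]
  simp only [Matrix.det_fin_three, Matrix.of_apply, Matrix.cons_val',
    Matrix.cons_val_zero, Matrix.cons_val_fin_one, Matrix.cons_val_one, Matrix.cons_val]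
  linear_combination -r * sin_sq_add_cos_sq α

/-- For all `τ, v, u`, the squared Euclidean norm of `F (τ, v, u)` equals `e^{2τ sin v}`,
and the absolute value of the determinant of the Jacobian (total derivative) of `F` at
`(τ, v, u)` equals `e^{3τ sin v} · |τ| · |sin(τ cos v)|`. -/
theorem normSq_and_jacobian_of_F :
    ∀ τ v u : ℝ,
      (F (τ, v, u)).1 ^ 2 + (F (τ, v, u)).2.1 ^ 2 + (F (τ, v, u)).2.2 ^ 2 =
        Real.exp (2 * (τ * Real.sin v)) ∧
      |(fderiv ℝ F (τ, v, u)).det| =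
        Real.exp (3 * (τ * Real.sin v)) * |τ| * |Real.sin (τ * Real.cos v)| := by
  intro τ v u
  refine ⟨expSphericalCoord_normSq (altitudePolarCoord (τ, v, u)), ?_⟩
  rw [F_eq_expSphericalCoord_comp_altitudePolarCoord,
    fderiv_comp _ (differentiable_expSphericalCoord _) (differentiable_altitudePolarCoord _),
    ContinuousLinearMap.det_comp, det_fderiv_expSphericalCoord, det_fderiv_altitudePolarCoord,
    abs_mul, abs_mul, abs_neg, abs_of_pos (exp_pos _)]
  exact mul_right_comm _ _ _
end

section
/- The map F is injective on the open box (0, π) × (−π/2, π/2) × (−π, π); more precisely, for every ρ with 0 < ρ ≤ π, F is injective on (0, ρ) × (−π/2, π/2) × (−π, π]. -/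
/-!
Writing `a = τ sin v` and `θ = τ cos v`, we have `F (τ, v, u) = eᵃ • S (θ, u)`, where
`S (θ, u) = (cos θ, sin θ cos u, sin θ sin u)` lies on the unit sphere. The sum of squares of the
coordinates of `F` recovers `eᵃ`, hence `a` and then `S (θ, u)`. Spherical coordinates are injective
for `θ ∈ (0, π)`, `u ∈ (-π, π]`, and `θ ∈ (0, π)` as soon as `τ < π`, so `θ` and `u` are determined.
Finally `(θ, a)` is the point with polar coordinates `(τ, v)`, and these are unique for `τ > 0`,
`v ∈ (-π/2, π/2)`.
-/

open Real Set

noncomputable def sphericalCoord (q : ℝ × ℝ) : ℝ × ℝ × ℝ :=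
  (cos q.1, sin q.1 * cos q.2, sin q.1 * sin q.2)

theorem sphericalCoord_sq_add_sq_add_sq (q : ℝ × ℝ) :
    (sphericalCoord q).1 ^ 2 + (sphericalCoord q).2.1 ^ 2 + (sphericalCoord q).2.2 ^ 2 = 1 := by
  simp only [sphericalCoord]
  linear_combination sin q.1 ^ 2 * sin_sq_add_cos_sq q.2 + sin_sq_add_cos_sq q.1

theorem eq_of_cos_eq_of_sin_eq {u u' : ℝ} (hu : u ∈ Ioc (-π) π) (hu' : u' ∈ Ioc (-π) π)
    (hcos : cos u = cos u') (hsin : sin u = sin u') : u = u' := by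
  rw [← Complex.arg_cos_add_sin_mul_I hu, ← Complex.arg_cos_add_sin_mul_I hu',
    ← Complex.ofReal_cos, ← Complex.ofReal_sin, hcos, hsin, Complex.ofReal_cos, Complex.ofReal_sin]

theorem sphericalCoord_injOn : InjOn sphericalCoord (Ioo 0 π ×ˢ Ioc (-π) π) := by
  rintro ⟨θ, u⟩ ⟨hθ, hu⟩ ⟨θ', u'⟩ ⟨hθ', hu'⟩ h
  simp only [sphericalCoord, Prod.mk.injEq] at h
  obtain ⟨hcosθ, hcosu, hsinu⟩ := h
  obtain rfl : θ = θ' := injOn_cos (Ioo_subset_Icc_self hθ) (Ioo_subset_Icc_self hθ') hcosθ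
  have hsinθ : sin θ ≠ 0 := (sin_pos_of_pos_of_lt_pi hθ.1 hθ.2).ne'
  exact Prod.ext rfl <|
    eq_of_cos_eq_of_sin_eq hu hu' (mul_left_cancel₀ hsinθ hcosu) (mul_left_cancel₀ hsinθ hsinu)

theorem eq_of_smul_eq_smul_of_sq_add_sq_add_sq_eq_one {r s : ℝ} {x y : ℝ × ℝ × ℝ}
    (hr : 0 < r) (hs : 0 < s)
    (hx : x.1 ^ 2 + x.2.1 ^ 2 + x.2.2 ^ 2 = 1) (hy : y.1 ^ 2 + y.2.1 ^ 2 + y.2.2 ^ 2 = 1)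
    (h : r • x = s • y) : r = s ∧ x = y := by
  simp only [Prod.ext_iff, Prod.smul_fst, Prod.smul_snd, smul_eq_mul] at h
  obtain ⟨h₁, h₂, h₃⟩ := h
  have hsq : r ^ 2 = s ^ 2 := by
    linear_combination -r ^ 2 * hx + s ^ 2 * hy + (r * x.1 + s * y.1) * h₁ +
      (r * x.2.1 + s * y.2.1) * h₂ + (r * x.2.2 + s * y.2.2) * h₃
  obtain rfl : r = s := (sq_eq_sq₀ hr.le hs.le).mp hsq
  exact ⟨rfl, smul_right_injective _ hr.ne' (Prod.ext h₁ (Prod.ext h₂ h₃))⟩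

theorem F_eq_exp_smul_sphericalCoord (p : ℝ × ℝ × ℝ) :
    F p = exp (p.1 * sin p.2.1) • sphericalCoord (p.1 * cos p.2.1, p.2.2) := by
  simp only [F, sphericalCoord, Prod.smul_mk, smul_eq_mul, mul_assoc]

theorem mul_cos_mem_Ioo {τ v : ℝ} (hτ : τ ∈ Ioo 0 π) (hv : v ∈ Ioo (-(π / 2)) (π / 2)) :
    τ * cos v ∈ Ioo 0 π :=
  ⟨mul_pos hτ.1 (cos_pos_of_mem_Ioo hv),
    (mul_le_of_le_one_right hτ.1.le (cos_le_one v)).trans_lt hτ.2⟩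

theorem F_injOn : InjOn F (Ioo 0 π ×ˢ Ioo (-(π / 2)) (π / 2) ×ˢ Ioc (-π) π) := by
  rintro ⟨τ, v, u⟩ ⟨hτ, hv, hu⟩ ⟨τ', v', u'⟩ ⟨hτ', hv', hu'⟩ h
  rw [F_eq_exp_smul_sphericalCoord, F_eq_exp_smul_sphericalCoord] at h
  obtain ⟨hexp, hS⟩ := eq_of_smul_eq_smul_of_sq_add_sq_add_sq_eq_one (exp_pos _) (exp_pos _)
    (sphericalCoord_sq_add_sq_add_sq _) (sphericalCoord_sq_add_sq_add_sq _) h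
  obtain ⟨hcos, rfl⟩ := Prod.ext_iff.mp <|
    sphericalCoord_injOn (mk_mem_prod (mul_cos_mem_Ioo hτ hv) hu)
      (mk_mem_prod (mul_cos_mem_Ioo hτ' hv') hu') hS
  have hpolar : polarCoord.symm (τ, v) = polarCoord.symm (τ', v') := by
    simp only [polarCoord_symm_apply]
    exact Prod.ext hcos (exp_injective hexp)
  have hv_Ioo : Ioo (-(π / 2)) (π / 2) ⊆ Ioo (-π) π :=
    Ioo_subset_Ioo (by linarith [pi_pos]) (by linarith [pi_pos])
  obtain ⟨rfl, rfl⟩ := Prod.ext_iff.mp <| polarCoord.symm.injOn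
    (mk_mem_prod hτ.1 (hv_Ioo hv)) (mk_mem_prod hτ'.1 (hv_Ioo hv')) hpolar
  rfl

/-- `F` is injective on the open box `(0, π) × (−π/2, π/2) × (−π, π)`; more precisely,
for every `ρ` with `0 < ρ ≤ π`, `F` is injective on `(0, ρ) × (−π/2, π/2) × (−π, π]`. -/
theorem F_injOn_box :
    Set.InjOn F (Ioo 0 π ×ˢ Ioo (-(π/2)) (π/2) ×ˢ Ioo (-π) π) ∧
    ∀ ρ : ℝ, 0 < ρ → ρ ≤ π →
      Set.InjOn F (Ioo 0 ρ ×ˢ Ioo (-(π/2)) (π/2) ×ˢ Ioc (-π) π) :=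
  ⟨F_injOn.mono (prod_mono_right (prod_mono_right Ioo_subset_Ioc_self)),
    fun _ _ hρ => F_injOn.mono (prod_mono_left (Ioo_subset_Ioo_right hρ))⟩
end

section
/- For every ρ with 0 < ρ ≤ π, the volume of the geodesic ball of radius ρ in the projective model of S²×R, namely the integral of (x² + y² + z²)^{−3/2} over the image F((0, ρ) × (−π/2, π/2) × (−π, π)) with respect to Lebesgue measure on ℝ³, equals 2π ∫₀^ρ ∫_{−π/2}^{π/2} τ sin(τ cos v) dv dτ. -/
/-!
Write a point of `ℝ³ \ {0}` as `x = eᵃ ω(θ, u)`, with `ω` the spherical-coordinate parametrization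
of `S²`. In the coordinates `(a, θ, u)` the density `|x|⁻³ dx` becomes `sin θ da dθ du`, the
product volume of `ℝ × S²`. The map `F` is this parametrization precomposed with polar coordinates
`(a, θ) = (τ sin v, τ cos v)` in the `(a, θ)`-plane, which contribute the Jacobian factor `τ`.
For `ρ ≤ π` the polar angle `θ = τ cos v` stays in `(0, π)`, so both maps are injective on the
parameter box and the change of variables formula applies; integrating out `u` gives `2π`.
-/

open Real Set MeasureTheory

namespace Module.Basis

protected noncomputable def finThreeProd (R : Type*) [Semiring R] : Basis (Fin 3) R (R × R × R) :=
  .ofEquivFun <| (LinearEquiv.refl R R).prodCongr (LinearEquiv.finTwoArrow R R).symm ≪≫ₗ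
    Fin.consLinearEquiv R fun _ => R

@[simp]
theorem coe_finThreeProd_repr {R : Type*} [Semiring R] (x : R × R × R) :
    ⇑((Basis.finThreeProd R).repr x) = ![x.1, x.2.1, x.2.2] := by
  ext i; fin_cases i <;> rfl

end Module.Basis

theorem Matrix.toLin_finThreeProd_apply {R : Type*} [CommSemiring R]
    (M : Matrix (Fin 3) (Fin 3) R) (x : R × R × R) :
    M.toLin (.finThreeProd R) (.finThreeProd R) x =
      (M 0 0 * x.1 + M 0 1 * x.2.1 + M 0 2 * x.2.2,
       M 1 0 * x.1 + M 1 1 * x.2.1 + M 1 2 * x.2.2,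
       M 2 0 * x.1 + M 2 1 * x.2.1 + M 2 2 * x.2.2) := by
  have h := congrFun (M.repr_toLin (.finThreeProd R) (.finThreeProd R) x)
  simp only [Module.Basis.coe_finThreeProd_repr, Matrix.mulVec, dotProduct,
    Fin.sum_univ_three] at h
  ext
  · simpa using h 0
  · simpa using h 1
  · simpa using h 2

theorem eq_of_mul_cos_eq_of_mul_sin_eq {r r' θ θ' : ℝ} (hr : 0 < r) (hr' : 0 < r')
    (hθ : θ ∈ Ioo (-π) π) (hθ' : θ' ∈ Ioo (-π) π)
    (hcos : r * cos θ = r' * cos θ') (hsin : r * sin θ = r' * sin θ') : r = r' ∧ θ = θ' :=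
  Prod.ext_iff.mp <| polarCoord.symm.injOn (show (r, θ) ∈ polarCoord.target from ⟨hr, hθ⟩)
    (show (r', θ') ∈ polarCoord.target from ⟨hr', hθ'⟩) (Prod.ext hcos hsin)

theorem setIntegral_Ioo_prod_Ioo_prod_Ioo {E : Type*} [NormedAddCommGroup E] [NormedSpace ℝ E]
    [CompleteSpace E] {g : ℝ → ℝ → E} (hg : Continuous (Function.uncurry g))
    {a b c d e f : ℝ} (hab : a ≤ b) (hcd : c ≤ d) (hef : e ≤ f) :
    ∫ p in Ioo a b ×ˢ Ioo c d ×ˢ Ioo e f, g p.1 p.2.1 =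
      (f - e) • ∫ x in a..b, ∫ y in c..d, g x y := by
  have hint : IntegrableOn (fun p : ℝ × ℝ × ℝ => g p.1 p.2.1) (Icc a b ×ˢ Icc c d ×ˢ Icc e f) :=
    (hg.comp (continuous_fst.prodMk continuous_snd.fst)).continuousOn.integrableOn_compact
      (isCompact_Icc.prod (isCompact_Icc.prod isCompact_Icc))
  rw [Measure.volume_eq_prod, setIntegral_prod _ (hint.mono_set <|
    prod_mono Ioo_subset_Icc_self <| prod_mono Ioo_subset_Icc_self Ioo_subset_Icc_self)]
  simp_rw [Measure.volume_eq_prod, ← Measure.prod_restrict, integral_fun_fst, integral_smul]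
  simp [hef, hab, hcd, intervalIntegral.integral_of_le, integral_Ioc_eq_integral_Ioo]

-- Instance search does not see through the defeq `volume = volume.prod volume` on `ℝ × ℝ × ℝ`.
instance : Measure.IsAddHaarMeasure (volume : Measure (ℝ × ℝ × ℝ)) :=
  Measure.prod.instIsAddHaarMeasure _ _

noncomputable def expSpherical (q : ℝ × ℝ × ℝ) : ℝ × ℝ × ℝ :=
  (exp q.1 * cos q.2.1, exp q.1 * sin q.2.1 * cos q.2.2, exp q.1 * sin q.2.1 * sin q.2.2)

noncomputable def fderivExpSpherical (q : ℝ × ℝ × ℝ) : ℝ × ℝ × ℝ →L[ℝ] ℝ × ℝ × ℝ :=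
  (Matrix.toLin (.finThreeProd ℝ) (.finThreeProd ℝ)
    !![exp q.1 * cos q.2.1, -(exp q.1 * sin q.2.1), 0;
      exp q.1 * sin q.2.1 * cos q.2.2, exp q.1 * cos q.2.1 * cos q.2.2,
        -(exp q.1 * sin q.2.1 * sin q.2.2);
      exp q.1 * sin q.2.1 * sin q.2.2, exp q.1 * cos q.2.1 * sin q.2.2,
        exp q.1 * sin q.2.1 * cos q.2.2]).toContinuousLinearMap

theorem hasFDerivAt_expSpherical (q : ℝ × ℝ × ℝ) :
    HasFDerivAt expSpherical (fderivExpSpherical q) q := by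
  have ha : HasFDerivAt (fun q : ℝ × ℝ × ℝ => q.1) _ q := hasFDerivAt_fst (𝕜 := ℝ)
  have hθ : HasFDerivAt (fun q : ℝ × ℝ × ℝ => q.2.1) _ q := (hasFDerivAt_snd (𝕜 := ℝ)).fst
  have hu : HasFDerivAt (fun q : ℝ × ℝ × ℝ => q.2.2) _ q := (hasFDerivAt_snd (𝕜 := ℝ)).snd
  refine (ha.exp.mul hθ.cos |>.prodMk <| (ha.exp.mul hθ.sin).mul hu.cos |>.prodMk <|
    (ha.exp.mul hθ.sin).mul hu.sin).congr_fderiv ?_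
  ext <;> simp [fderivExpSpherical, Matrix.toLin_finThreeProd_apply] <;> ring

theorem det_fderivExpSpherical (q : ℝ × ℝ × ℝ) :
    (fderivExpSpherical q).det = exp q.1 ^ 3 * sin q.2.1 := by
  simp [fderivExpSpherical, Matrix.det_fin_three]
  linear_combination exp q.1 ^ 3 * sin q.2.1 *
    (cos q.2.1 ^ 2 * sin_sq_add_cos_sq q.2.2 + sin q.2.1 ^ 2 * sin_sq_add_cos_sq q.2.2 +
      sin_sq_add_cos_sq q.2.1)

theorem sq_add_sq_add_sq_expSpherical (q : ℝ × ℝ × ℝ) :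
    (expSpherical q).1 ^ 2 + (expSpherical q).2.1 ^ 2 + (expSpherical q).2.2 ^ 2 =
      exp q.1 ^ 2 := by
  simp only [expSpherical]
  linear_combination exp q.1 ^ 2 *
    (sin q.2.1 ^ 2 * sin_sq_add_cos_sq q.2.2 + sin_sq_add_cos_sq q.2.1)

theorem abs_det_fderivExpSpherical_mul_rpow {q : ℝ × ℝ × ℝ} (hθ : 0 ≤ sin q.2.1) :
    |(fderivExpSpherical q).det| *
        ((expSpherical q).1 ^ 2 + (expSpherical q).2.1 ^ 2 + (expSpherical q).2.2 ^ 2) ^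
          (-(3 : ℝ) / 2) =
      sin q.2.1 := by
  have hpow : (exp q.1 ^ 2) ^ (-(3 : ℝ) / 2) = (exp q.1 ^ 3)⁻¹ := by
    rw [← exp_nat_mul, ← exp_mul, ← exp_nat_mul, ← exp_neg]
    ring_nf
  rw [det_fderivExpSpherical, abs_of_nonneg (by positivity), sq_add_sq_add_sq_expSpherical, hpow]
  field_simp

theorem injOn_expSpherical : InjOn expSpherical (univ ×ˢ Ioo 0 π ×ˢ Ioo (-π) π) := by
  rintro ⟨a, θ, u⟩ ⟨-, hθ, hu⟩ ⟨a', θ', u'⟩ ⟨-, hθ', hu'⟩ h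
  simp only [expSpherical, Prod.mk.injEq, mul_assoc] at h
  obtain ⟨hx, hy, hz⟩ := h
  obtain ⟨hr, rfl⟩ := eq_of_mul_cos_eq_of_mul_sin_eq
    (mul_pos (exp_pos a) (sin_pos_of_mem_Ioo hθ)) (mul_pos (exp_pos a') (sin_pos_of_mem_Ioo hθ'))
    hu hu' (by linear_combination hy) (by linear_combination hz)
  obtain ⟨ha, rfl⟩ := eq_of_mul_cos_eq_of_mul_sin_eq (exp_pos a) (exp_pos a')
    (Ioo_subset_Ioo_left (by linarith [pi_pos]) hθ)
    (Ioo_subset_Ioo_left (by linarith [pi_pos]) hθ') hx hr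
  rw [exp_injective ha]

noncomputable def geodesicPolar (p : ℝ × ℝ × ℝ) : ℝ × ℝ × ℝ :=
  (p.1 * sin p.2.1, p.1 * cos p.2.1, p.2.2)

noncomputable def fderivGeodesicPolar (p : ℝ × ℝ × ℝ) : ℝ × ℝ × ℝ →L[ℝ] ℝ × ℝ × ℝ :=
  (Matrix.toLin (.finThreeProd ℝ) (.finThreeProd ℝ)
    !![sin p.2.1, p.1 * cos p.2.1, 0;
      cos p.2.1, -(p.1 * sin p.2.1), 0;
      0, 0, 1]).toContinuousLinearMap

theorem hasFDerivAt_geodesicPolar (p : ℝ × ℝ × ℝ) :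
    HasFDerivAt geodesicPolar (fderivGeodesicPolar p) p := by
  have hτ : HasFDerivAt (fun p : ℝ × ℝ × ℝ => p.1) _ p := hasFDerivAt_fst (𝕜 := ℝ)
  have hv : HasFDerivAt (fun p : ℝ × ℝ × ℝ => p.2.1) _ p := (hasFDerivAt_snd (𝕜 := ℝ)).fst
  have hu : HasFDerivAt (fun p : ℝ × ℝ × ℝ => p.2.2) _ p := (hasFDerivAt_snd (𝕜 := ℝ)).snd
  refine (hτ.mul hv.sin |>.prodMk <| hτ.mul hv.cos |>.prodMk hu).congr_fderiv ?_
  ext <;> simp [fderivGeodesicPolar, Matrix.toLin_finThreeProd_apply]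

theorem det_fderivGeodesicPolar (p : ℝ × ℝ × ℝ) : (fderivGeodesicPolar p).det = -p.1 := by
  simp [fderivGeodesicPolar, Matrix.det_fin_three]
  linear_combination (-p.1) * sin_sq_add_cos_sq p.2.1

theorem injOn_geodesicPolar : InjOn geodesicPolar (Ioi 0 ×ˢ Ioo (-(π / 2)) (π / 2) ×ˢ univ) := by
  rintro ⟨τ, v, u⟩ ⟨hτ, hv, -⟩ ⟨τ', v', u'⟩ ⟨hτ', hv', -⟩ h
  simp only [geodesicPolar, Prod.mk.injEq] at h
  obtain ⟨hsin, hcos, rfl⟩ := h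
  have hmem : ∀ w ∈ Ioo (-(π / 2)) (π / 2), π / 2 - w ∈ Ioo (-π) π := fun w hw =>
    ⟨by linarith [hw.2, pi_pos], by linarith [hw.1, pi_pos]⟩
  obtain ⟨rfl, hvv⟩ := eq_of_mul_cos_eq_of_mul_sin_eq hτ hτ' (hmem v hv) (hmem v' hv')
    (by simpa only [cos_pi_div_two_sub] using hsin)
    (by simpa only [sin_pi_div_two_sub] using hcos)
  obtain rfl : v = v' := by linarith
  rfl

theorem mapsTo_geodesicPolar {ρ : ℝ} (hρ : ρ ≤ π) :
    MapsTo geodesicPolar (Ioo 0 ρ ×ˢ Ioo (-(π / 2)) (π / 2) ×ˢ Ioo (-π) π)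
      (univ ×ˢ Ioo 0 π ×ˢ Ioo (-π) π) := by
  rintro ⟨τ, v, u⟩ ⟨⟨hτ, hτρ⟩, hv, hu⟩
  refine ⟨trivial, ⟨mul_pos hτ (cos_pos_of_mem_Ioo hv), ?_⟩, hu⟩
  calc τ * cos v ≤ τ := mul_le_of_le_one_right hτ.le (cos_le_one v)
    _ < π := hτρ.trans_le hρ

theorem F_eq_expSpherical_comp_geodesicPolar : F = expSpherical ∘ geodesicPolar := rfl

theorem hasFDerivAt_F (p : ℝ × ℝ × ℝ) :
    HasFDerivAt F ((fderivExpSpherical (geodesicPolar p)).comp (fderivGeodesicPolar p)) p :=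
  (hasFDerivAt_expSpherical _).comp p (hasFDerivAt_geodesicPolar p)

theorem injOn_F {ρ : ℝ} (hρ : ρ ≤ π) :
    InjOn F (Ioo 0 ρ ×ˢ Ioo (-(π / 2)) (π / 2) ×ˢ Ioo (-π) π) :=
  injOn_expSpherical.comp (injOn_geodesicPolar.mono <|
    prod_mono Ioo_subset_Ioi_self <| prod_mono subset_rfl <| subset_univ _)
    (mapsTo_geodesicPolar hρ)

theorem abs_det_fderiv_F_smul_rpow {ρ : ℝ} (hρ : ρ ≤ π) :
    EqOn (fun p => |((fderivExpSpherical (geodesicPolar p)).comp (fderivGeodesicPolar p)).det| •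
        ((F p).1 ^ 2 + (F p).2.1 ^ 2 + (F p).2.2 ^ 2) ^ (-(3 : ℝ) / 2))
      (fun p => p.1 * sin (p.1 * cos p.2.1))
      (Ioo 0 ρ ×ˢ Ioo (-(π / 2)) (π / 2) ×ˢ Ioo (-π) π) := by
  intro p hp
  have hθ := (mapsTo_geodesicPolar hρ hp).2.1
  have hdet : ((fderivExpSpherical (geodesicPolar p)).comp (fderivGeodesicPolar p)).det =
      (fderivExpSpherical (geodesicPolar p)).det * (fderivGeodesicPolar p).det :=
    LinearMap.det_comp _ _
  dsimp only
  rw [smul_eq_mul, hdet, abs_mul, mul_right_comm, F_eq_expSpherical_comp_geodesicPolar,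
    Function.comp_apply, abs_det_fderivExpSpherical_mul_rpow (sin_pos_of_mem_Ioo hθ).le,
    det_fderivGeodesicPolar, abs_neg, abs_of_pos hp.1.1, mul_comm]
  rfl

/-- For `0 < ρ ≤ π`, the volume of the geodesic ball of radius `ρ` in the projective model
of `S²×R` — the integral of `(x² + y² + z²)^{-3/2}` over the region
`F((0,ρ) × (−π/2,π/2) × (−π,π))` with respect to Lebesgue measure — equals
`2π ∫₀^ρ ∫_{−π/2}^{π/2} τ sin(τ cos v) dv dτ`. -/
theorem volume_geodesic_ball :
    ∀ ρ : ℝ, 0 < ρ → ρ ≤ π →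
      (∫ p in F '' (Ioo 0 ρ ×ˢ Ioo (-(π/2)) (π/2) ×ˢ Ioo (-π) π),
          (p.1 ^ 2 + p.2.1 ^ 2 + p.2.2 ^ 2) ^ (-(3 : ℝ) / 2)) =
        2 * π * ∫ τ in (0 : ℝ)..ρ, ∫ v in (-(π/2))..(π/2), τ * Real.sin (τ * Real.cos v) := by
  intro ρ hρ hρπ
  have hD : MeasurableSet (Ioo 0 ρ ×ˢ Ioo (-(π / 2)) (π / 2) ×ˢ Ioo (-π) π) :=
    measurableSet_Ioo.prod (measurableSet_Ioo.prod measurableSet_Ioo)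
  rw [integral_image_eq_integral_abs_det_fderiv_smul volume hD
      (fun p _ => (hasFDerivAt_F p).hasFDerivWithinAt) (injOn_F hρπ),
    setIntegral_congr_fun hD (abs_det_fderiv_F_smul_rpow hρπ),
    setIntegral_Ioo_prod_Ioo_prod_Ioo (g := fun τ v => τ * sin (τ * cos v)) (by fun_prop) hρ.le
      (by linarith [pi_pos] : -(π / 2) ≤ π / 2) (by linarith [pi_pos] : -π ≤ π), smul_eq_mul]
  ring
end
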